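/- Let n >= 4, let r > 0, and let p : Fin n -> R^2 be a packing of n equal circles of radius r on the flat torus R^2/Lambda. Then no two circles share three or more tangencies: for all i ≠ j in Fin n, there do not exist three pairwise distinct lattice vectors lambda1, lambda2, lambda3 in Lambda such that ||p i - p j + lambda_t|| = 2r for t = 1, 2, 3. -/

import Mathlib

/-!
Let `w₁, w₂, w₃` be the three tangency vectors `p i - p j + λₜ`. They lie on the circle of
radius `2r` about the origin, so they are affinely independent, and their differences span a
sublattice `Γ` of `Λ` with covolume `|ω(w₂ - w₁, w₃ - w₁)|` (`ω` the area form). Expanding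
`ω(w₂ - w₁, w₃ - w₁) = ω(w₁, w₂) + ω(w₂, w₃) + ω(w₃, w₁)` and using `|ω(a, b)| ≤ ‖a‖‖b‖` bounds the
covolume by `3(2r)² = 12r²`. On the other hand the packing is also `Γ`-periodic, so its `n ≥ 4`
discs fit disjointly into a fundamental domain of `Γ`: `4πr² ≤ covolume`. Since `π > 3`, this is
impossible.
-/

noncomputable section

/-- The lattice generated by two vectors `v1`, `v2` in the Euclidean plane. -/
def GLat (v1 v2 : EuclideanSpace ℝ (Fin 2)) : Set (EuclideanSpace ℝ (Fin 2)) :=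
  {v | ∃ m n : ℤ, v = (m : ℝ) • v1 + (n : ℝ) • v2}

/-- `p` is a packing of `k` equal circles of radius `r` on the flat torus `ℝ²/Λ(v1,v2)`. -/
def IsPackingG (v1 v2 : EuclideanSpace ℝ (Fin 2)) {k : ℕ} (r : ℝ)
    (p : Fin k → EuclideanSpace ℝ (Fin 2)) : Prop :=
  ∀ i j : Fin k, ∀ l ∈ GLat v1 v2, (i ≠ j ∨ l ≠ 0) → 2 * r ≤ ‖p i - p j + l‖

open MeasureTheory Module Metric Set
open scoped Pointwise EuclideanSpace

theorem AffineIndependent.linearIndependent_vsub_three {k V P : Type*} [Ring k] [AddCommGroup V]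
    [Module k V] [AddTorsor V P] {p₁ p₂ p₃ : P} (h : AffineIndependent k ![p₁, p₂, p₃]) :
    LinearIndependent k ![p₂ -ᵥ p₁, p₃ -ᵥ p₁] := by
  rw [affineIndependent_iff_linearIndependent_vsub k _ 0,
    ← linearIndependent_equiv (finSuccAboveEquiv (0 : Fin 3))] at h
  convert h using 1
  ext i
  fin_cases i <;> rfl

theorem linearIndependent_sub_of_norm_eq {E : Type*} [NormedAddCommGroup E]
    [InnerProductSpace ℝ E] {u v w : E} {ρ : ℝ} (hu : ‖u‖ = ρ) (hv : ‖v‖ = ρ) (hw : ‖w‖ = ρ)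
    (huv : u ≠ v) (huw : u ≠ w) (hvw : v ≠ w) : LinearIndependent ℝ ![v - u, w - u] := by
  have hcos : EuclideanGeometry.Cospherical ({u, v, w} : Set E) :=
    ⟨0, ρ, by simp [hu, hv, hw]⟩
  exact (hcos.affineIndependent_of_ne huv huw hvw).linearIndependent_vsub_three

theorem MeasureTheory.IsAddFundamentalDomain.sum_measure_ball_le {E : Type*} [NormedAddCommGroup E]
    [MeasurableSpace E] [BorelSpace E] {μ : Measure E} [μ.IsAddLeftInvariant]
    {Λ : AddSubgroup E} [Countable Λ] {F : Set E} (hF : IsAddFundamentalDomain Λ F μ)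
    {κ : Type*} [Fintype κ] {p : κ → E} {r : ℝ}
    (hp : ∀ i j, ∀ g ∈ Λ, (i ≠ j ∨ g ≠ 0) → 2 * r ≤ ‖p i - p j + g‖) :
    ∑ k, μ (ball (p k) r) ≤ μ F := by
  have hdisj : ∀ (i j : κ) (g g' : Λ), (i ≠ j ∨ g ≠ g') →
      Disjoint (ball ((g : E) + p i) r) (ball ((g' : E) + p j) r) := by
    intro i j g g' hne
    refine ball_disjoint_ball ?_
    rw [dist_eq_norm, show (g : E) + p i - (g' + p j) = p i - p j + (g - g' : Λ) by
      push_cast; abel]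
    have := hp i j _ (g - g').2 (hne.imp_right fun h => by simpa [sub_eq_zero] using h)
    linarith
  set t := ⋃ k, ball (p k) r
  calc ∑ k, μ (ball (p k) r) = μ t := by
        rw [measure_iUnion (fun i j hij => by simpa using hdisj i j 0 0 (Or.inl hij))
          (fun _ => measurableSet_ball), tsum_fintype]
    _ ≤ μ F := hF.measure_le_of_pairwise_disjoint
        (MeasurableSet.iUnion fun _ => measurableSet_ball).nullMeasurableSet
        fun g g' hne => by
          refine (Disjoint.mono inter_subset_left inter_subset_left ?_).aedisjoint
          simp only [t, vadd_set_iUnion, disjoint_iUnion_left, disjoint_iUnion_right]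
          intro i j
          show Disjoint ((g : E) +ᵥ ball (p j) r) ((g' : E) +ᵥ ball (p i) r)
          rw [vadd_ball, vadd_ball]
          exact hdisj j i g g' (Or.inr hne)

theorem volume_fundamentalDomain_eq_abs_volumeForm {E : Type*} [NormedAddCommGroup E]
    [InnerProductSpace ℝ E] [FiniteDimensional ℝ E] [MeasurableSpace E] [BorelSpace E] {n : ℕ}
    [Fact (finrank ℝ E = n)] (o : Orientation ℝ E (Fin n)) (b : Basis (Fin n) ℝ E) :
    volume (ZSpan.fundamentalDomain b) = ENNReal.ofReal |o.volumeForm b| := by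
  rw [measure_congr (ZSpan.fundamentalDomain_ae_parallelepiped b volume),
    ← o.measure_eq_volume, AlternatingMap.measure_parallelepiped]

section Plane

variable {E : Type*} [NormedAddCommGroup E] [InnerProductSpace ℝ E] [Fact (finrank ℝ E = 2)]
  (o : Orientation ℝ E (Fin 2))

attribute [local instance] FiniteDimensional.of_fact_finrank_eq_two

theorem card_mul_pi_mul_sq_le_abs_areaForm [MeasurableSpace E] [BorelSpace E] {x y : E}
    (hxy : LinearIndependent ℝ ![x, y]) {n : ℕ} {p : Fin n → E} {r : ℝ} (hr : 0 ≤ r)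
    (hp : ∀ i j, ∀ g ∈ Submodule.span ℤ {x, y}, (i ≠ j ∨ g ≠ 0) → 2 * r ≤ ‖p i - p j + g‖) :
    n * (Real.pi * r ^ 2) ≤ |o.areaForm x y| := by
  have h2 : finrank ℝ E = 2 := Fact.out
  let b := basisOfLinearIndependentOfCardEqFinrank hxy (by simp [h2])
  have hb : range b = {x, y} := by
    rw [coe_basisOfLinearIndependentOfCardEqFinrank, Matrix.range_cons, Matrix.range_cons,
      Matrix.range_empty, union_empty, singleton_union]
  -- Mathlib's countability instance is for the submodule, not for its additive subgroup.
  have : Countable (Submodule.span ℤ (range b)).toAddSubgroup :=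
    inferInstanceAs (Countable (Submodule.span ℤ (range b)))
  have hpack := (ZSpan.isAddFundamentalDomain' b volume).sum_measure_ball_le
    fun i j g hg => hp i j g (hb ▸ hg)
  have : Nontrivial E := Module.nontrivial_of_finrank_eq_succ h2
  simp only [InnerProductSpace.volume_ball_of_dim_even (k := 1) h2, Finset.sum_const,
    Finset.card_univ, Fintype.card_fin, nsmul_eq_mul] at hpack
  rw [volume_fundamentalDomain_eq_abs_volumeForm o, coe_basisOfLinearIndependentOfCardEqFinrank,
    ← o.areaForm_to_volumeForm] at hpack
  rw [← ENNReal.ofReal_le_ofReal_iff (abs_nonneg _)]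
  convert hpack using 1
  rw [h2, ENNReal.ofReal_mul (by positivity), ENNReal.ofReal_natCast,
    ENNReal.ofReal_mul Real.pi_pos.le, ENNReal.ofReal_pow hr]
  simp [mul_comm]

theorem abs_areaForm_sub_sub_le {u v w : E} {ρ : ℝ} (hu : ‖u‖ = ρ) (hv : ‖v‖ = ρ)
    (hw : ‖w‖ = ρ) : |o.areaForm (v - u) (w - u)| ≤ 3 * ρ ^ 2 := by
  have hexp : o.areaForm (v - u) (w - u) = o.areaForm u v + o.areaForm v w + o.areaForm w u := by
    simp only [map_sub, LinearMap.sub_apply, o.areaForm_apply_self]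
    rw [o.areaForm_swap u w, o.areaForm_swap v u]
    ring
  have hle : ∀ x y : E, ‖x‖ = ρ → ‖y‖ = ρ → |o.areaForm x y| ≤ ρ ^ 2 := fun x y hx hy => by
    simpa [hx, hy, sq] using o.abs_areaForm_le x y
  calc |o.areaForm (v - u) (w - u)|
      ≤ |o.areaForm u v| + |o.areaForm v w| + |o.areaForm w u| := hexp ▸ abs_add_three _ _ _
    _ ≤ 3 * ρ ^ 2 := by linarith [hle u v hu hv, hle v w hv hw, hle w u hw hu]

end Plane

theorem GLat_eq_span_pair (v1 v2 : EuclideanSpace ℝ (Fin 2)) :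
    GLat v1 v2 = Submodule.span ℤ {v1, v2} := by
  ext v
  simp [GLat, Submodule.mem_span_pair, Int.cast_smul_eq_zsmul, eq_comm]

theorem no_three_shared_tangencies_general (v1 v2 : EuclideanSpace ℝ (Fin 2))
    (n : ℕ) (hn : 4 ≤ n) (r : ℝ) (hr : 0 < r)
    (p : Fin n → EuclideanSpace ℝ (Fin 2)) (hp : IsPackingG v1 v2 r p)
    (i j : Fin n) :
    ¬ ∃ l1 l2 l3 : EuclideanSpace ℝ (Fin 2),
      l1 ∈ GLat v1 v2 ∧ l2 ∈ GLat v1 v2 ∧ l3 ∈ GLat v1 v2 ∧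
      l1 ≠ l2 ∧ l1 ≠ l3 ∧ l2 ≠ l3 ∧
      ‖p i - p j + l1‖ = 2 * r ∧ ‖p i - p j + l2‖ = 2 * r ∧
      ‖p i - p j + l3‖ = 2 * r := by
  rintro ⟨l1, l2, l3, hl1, hl2, hl3, h12, h13, h23, ht1, ht2, ht3⟩
  rw [GLat_eq_span_pair, SetLike.mem_coe] at hl1 hl2 hl3
  have hind := linearIndependent_sub_of_norm_eq ht1 ht2 ht3 (by simpa using h12)
    (by simpa using h13) (by simpa using h23)
  have hsub : Submodule.span ℤ {p i - p j + l2 - (p i - p j + l1),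
      p i - p j + l3 - (p i - p j + l1)} ≤ Submodule.span ℤ {v1, v2} := by
    simp [Submodule.span_le, insert_subset_iff, sub_mem hl2 hl1, sub_mem hl3 hl1]
  let o := (EuclideanSpace.basisFun (Fin 2) ℝ).toBasis.orientation
  have hdensity := card_mul_pi_mul_sq_le_abs_areaForm o hind hr.le
    fun a b g hg => hp a b g (by rw [GLat_eq_span_pair]; exact hsub hg)
  have harea := abs_areaForm_sub_sub_le o ht1 ht2 ht3
  have hn' : (4 : ℝ) ≤ n := by exact_mod_cast hn
  have hr2 : 0 < r ^ 2 := by positivity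
  nlinarith [mul_nonneg (sub_nonneg.2 hn') (mul_pos Real.pi_pos hr2).le,
    mul_pos hr2 (sub_pos.2 Real.pi_gt_three)]

theorem no_three_shared_tangencies (v1 v2 : EuclideanSpace ℝ (Fin 2))
    (hind : LinearIndependent ℝ ![v1, v2])
    (n : ℕ) (hn : 4 ≤ n) (r : ℝ) (hr : 0 < r)
    (p : Fin n → EuclideanSpace ℝ (Fin 2)) (hp : IsPackingG v1 v2 r p)
    (i j : Fin n) (hij : i ≠ j) :
    ¬ ∃ l1 l2 l3 : EuclideanSpace ℝ (Fin 2),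
      l1 ∈ GLat v1 v2 ∧ l2 ∈ GLat v1 v2 ∧ l3 ∈ GLat v1 v2 ∧
      l1 ≠ l2 ∧ l1 ≠ l3 ∧ l2 ≠ l3 ∧
      ‖p i - p j + l1‖ = 2 * r ∧ ‖p i - p j + l2‖ = 2 * r ∧
      ‖p i - p j + l3‖ = 2 * r :=
  no_three_shared_tangencies_general v1 v2 n hn r hr p hp i j
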